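/- In any simple drawing of a graph in the plane, let s = (u_0, u_3) be an edge crossing an edge (a,b), and let L be the closed curve formed by s together with a path from u_0 to u_3 avoiding a and b. If a and b lie in different connected components of the complement of L, then each of the ℓ-1 internally disjoint length-two paths connecting a and b, as well as the edge (a,b) itself, crosses L; hence the drawing has at least ℓ crossings involving edges of L. -/
import Mathlib

/-- in a simple drawing, let `L` be the closed curve formed by the
edge `s = (u_0,u_3)` (which crosses `(a,b)`) together with a path from `u_0` to
`u_3` avoiding `a` and `b`.  If `a` and `b` lie in different connected components
of the complement of `L`, then the edge `(a,b)` and each of the `ℓ-1` internally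
disjoint length-two paths from `a` to `b` (jointly: `ℓ` arcs from `a` to `b`)
crosses `L`; hence there are at least `ℓ` crossings with edges of `L`, one for
each arc. -/
theorem separating_curve_forces_crossings (ℓ : ℕ)
    (L : Set (ℝ × ℝ)) (base : ℝ × ℝ) (loop : Path base base)
    (hL : L = Set.range loop)
    (a b : ℝ × ℝ) (ha : a ∉ L) (hb : b ∉ L)
    (hsep : connectedComponentIn Lᶜ a ≠ connectedComponentIn Lᶜ b)
    (γ : Fin ℓ → Path a b) :
    (∀ i, (Set.range (γ i) ∩ L).Nonempty) ∧
    ∃ f : Fin ℓ → ℝ × ℝ, ∀ i, f i ∈ Set.range (γ i) ∩ L := by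
  have key : ∀ i, (Set.range (γ i) ∩ L).Nonempty := by
    intro i
    by_contra h
    rw [Set.not_nonempty_iff_eq_empty] at h
    have hsub : Set.range (γ i) ⊆ Lᶜ := by
      intro x hx hxL
      exact Set.eq_empty_iff_forall_notMem.mp h x ⟨hx, hxL⟩
    have hconn : IsPreconnected (Set.range (γ i)) :=
      (isConnected_range (γ i).continuous).isPreconnected
    have hasub : Set.range (γ i) ⊆ connectedComponentIn Lᶜ a :=
      hconn.subset_connectedComponentIn ⟨0, (γ i).source⟩ hsub
    have hb' : b ∈ connectedComponentIn Lᶜ a := hasub ⟨1, (γ i).target⟩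
    exact hsep (connectedComponentIn_eq hb')
  refine ⟨key, fun i => (key i).choose, fun i => (key i).choose_spec⟩
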